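/- (Exact form of Example 1: symmetric decomposition of the Wei–Goldbart state ρ(1/4, 3/8).) Let ω = exp(2πi/3) and ψ_k = (e₀ + ω^k e₁)/√2 ∈ ℂ² for k = 0, 1, 2. Then for all multi-indices I, J ∈ (Fin 2)³ one has (1/4)·χ_GHZ(I)·conj(χ_GHZ(J)) + (3/8)·χ_W(I)·conj(χ_W(J)) + (3/8)·χ_W̃(I)·conj(χ_W̃(J)) = (1/3)·Σ_{k=0}^{2} (Π_{t} ψ_k(I t)) · conj(Π_{t} ψ_k(J t)). In particular, the 3-qubit mixed state ρ(1/4,3/8) = (1/4)|GHZ⟩⟨GHZ| + (3/8)|W⟩⟨W| + (3/8)|W̃⟩⟨W̃| has a symmetric positive Hermitian decomposition with three terms, each of weight 1/3. -/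

import Mathlib

/-- `ω = exp(2πi/3)`. -/
noncomputable def omega3 : ℂ := Complex.exp (2 * Real.pi * Complex.I / 3)

/-- `ψ_k = (e₀ + ω^k e₁)/√2 ∈ ℂ²` for `k = 0, 1, 2`. -/
noncomputable def psiWG (k : Fin 3) : Fin 2 → ℂ :=
  fun j => if j = 0 then 1 / (Real.sqrt 2 : ℂ) else omega3 ^ (k : ℕ) / (Real.sqrt 2 : ℂ)

/-- The tensor of `|GHZ⟩`: nonzero entries `χ(0,0,0) = χ(1,1,1) = 1/√2`. -/
noncomputable def chiGHZ (I : Fin 3 → Fin 2) : ℂ :=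
  if (∑ t, (I t : ℕ)) = 0 ∨ (∑ t, (I t : ℕ)) = 3 then 1 / (Real.sqrt 2 : ℂ) else 0

/-- The tensor of `|W⟩`: nonzero entries `χ(0,0,1) = χ(0,1,0) = χ(1,0,0) = 1/√3`. -/
noncomputable def chiW (I : Fin 3 → Fin 2) : ℂ :=
  if (∑ t, (I t : ℕ)) = 1 then 1 / (Real.sqrt 3 : ℂ) else 0

/-- The tensor of `|W̃⟩`: nonzero entries `χ(1,1,0) = χ(1,0,1) = χ(0,1,1) = 1/√3`. -/
noncomputable def chiWt (I : Fin 3 → Fin 2) : ℂ :=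
  if (∑ t, (I t : ℕ)) = 2 then 1 / (Real.sqrt 3 : ℂ) else 0

/-!
Both sides depend on `I` and `J` only through their Hamming weights `s, s' ∈ {0, …, 3}`.
On the right, `∏ t, ψ_k (I t) = ω ^ (k s) / (2√2)` and `conj ω = ω²`, so the `k`-th term is
`(ω ^ (s + 2 s')) ^ k / 8`; averaging over `k` (orthogonality of the cube roots of unity) leaves
`1/8` if `s ≡ s' (mod 3)` and `0` otherwise. On the left, GHZ, W and W̃ live on the weights
`≡ 0, 1, 2 (mod 3)` respectively, and the mixing weights make each diagonal block equal to
`1/4 · (1/√2)² = 3/8 · (1/√3)² = 1/8`.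
-/

open Finset ComplexConjugate

theorem IsPrimitiveRoot.geom_sum_pow_eq_ite {R : Type*} [CommRing R] [IsDomain R] {ζ : R} {n : ℕ}
    (hζ : IsPrimitiveRoot ζ n) (m : ℕ) :
    ∑ k ∈ range n, (ζ ^ m) ^ k = if n ∣ m then (n : R) else 0 := by
  split_ifs with hdvd
  · simp [(hζ.pow_eq_one_iff_dvd m).2 hdvd]
  · have hne : ζ ^ m - 1 ≠ 0 := sub_ne_zero.2 (mt (hζ.pow_eq_one_iff_dvd m).1 hdvd)
    have hmul : (∑ k ∈ range n, (ζ ^ m) ^ k) * (ζ ^ m - 1) = 0 := by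
      rw [geom_sum_mul, ← pow_mul, mul_comm, pow_mul, hζ.pow_eq_one, one_pow, sub_self]
    exact (mul_eq_zero.1 hmul).resolve_right hne

lemma isPrimitiveRoot_omega3 : IsPrimitiveRoot omega3 3 := by
  simpa [omega3] using Complex.isPrimitiveRoot_exp 3 (by norm_num)

lemma norm_omega3 : ‖omega3‖ = 1 :=
  isPrimitiveRoot_omega3.norm'_eq_one (by norm_num)

lemma conj_omega3 : conj omega3 = omega3 ^ 2 := by
  rw [← Complex.inv_eq_conj norm_omega3]
  refine inv_eq_of_mul_eq_one_right ?_
  rw [← pow_succ', isPrimitiveRoot_omega3.pow_eq_one]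

lemma psiWG_apply (k : Fin 3) (j : Fin 2) :
    psiWG k j = omega3 ^ ((k : ℕ) * j) * (Real.sqrt 2 : ℂ)⁻¹ := by
  fin_cases j <;> simp [psiWG, div_eq_mul_inv]

lemma prod_psiWG {ι : Type*} [Fintype ι] (k : Fin 3) (I : ι → Fin 2) :
    ∏ t, psiWG k (I t) =
      omega3 ^ ((k : ℕ) * ∑ t, (I t : ℕ)) * (Real.sqrt 2 : ℂ)⁻¹ ^ Fintype.card ι := by
  simp only [psiWG_apply, prod_mul_distrib, prod_pow_eq_pow_sum, mul_sum, prod_const, card_univ]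

lemma prod_psiWG_mul_conj (k : Fin 3) (I J : Fin 3 → Fin 2) :
    (∏ t, psiWG k (I t)) * conj (∏ t, psiWG k (J t)) =
      (omega3 ^ (∑ t, (I t : ℕ) + 2 * ∑ t, (J t : ℕ))) ^ (k : ℕ) / 8 := by
  have hsqrt : conj ((Real.sqrt 2 : ℂ)⁻¹) = (Real.sqrt 2 : ℂ)⁻¹ := by simp
  have h8 : ((Real.sqrt 2 : ℂ)⁻¹) ^ 6 = 1 / 8 := by
    have : ((Real.sqrt 2 : ℂ)⁻¹) ^ 6 = (((Real.sqrt 2 ^ 2 : ℝ) : ℂ) ^ 3)⁻¹ := by push_cast; ring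
    rw [this, Real.sq_sqrt zero_le_two]
    norm_num
  rw [prod_psiWG, prod_psiWG, map_mul, map_pow, map_pow, conj_omega3, hsqrt, Fintype.card_fin,
    div_eq_mul_one_div, ← h8]
  ring

lemma sum_prod_psiWG_mul_conj (I J : Fin 3 → Fin 2) :
    (1 / 3 : ℂ) * ∑ k : Fin 3, (∏ t, psiWG k (I t)) * conj (∏ t, psiWG k (J t)) =
      if 3 ∣ ∑ t, (I t : ℕ) + 2 * ∑ t, (J t : ℕ) then 1 / 8 else 0 := by
  simp only [prod_psiWG_mul_conj, ← sum_div]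
  rw [Fin.sum_univ_eq_sum_range (fun k => (omega3 ^ _) ^ k) 3,
    isPrimitiveRoot_omega3.geom_sum_pow_eq_ite]
  split_ifs <;> norm_num

lemma sum_val_le_card {ι : Type*} [Fintype ι] (I : ι → Fin 2) :
    ∑ t, (I t : ℕ) ≤ Fintype.card ι := by
  simpa using sum_le_sum fun t (_ : t ∈ univ) => Nat.lt_succ_iff.1 (I t).isLt

lemma conj_ite_one_div_ofReal (p : Prop) [Decidable p] (r : ℝ) :
    conj (if p then 1 / (r : ℂ) else 0) = if p then 1 / (r : ℂ) else 0 := by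
  split_ifs <;> simp

lemma inv_sqrt_mul_inv_sqrt {r : ℝ} (hr : 0 ≤ r) :
    (Real.sqrt r : ℂ)⁻¹ * (Real.sqrt r : ℂ)⁻¹ = (r : ℂ)⁻¹ := by
  rw [← mul_inv, ← Complex.ofReal_mul, Real.mul_self_sqrt hr]

lemma weiGoldbart_density_eq_ite (I J : Fin 3 → Fin 2) :
    (1 / 4 : ℂ) * chiGHZ I * conj (chiGHZ J) + (3 / 8 : ℂ) * chiW I * conj (chiW J)
        + (3 / 8 : ℂ) * chiWt I * conj (chiWt J) =
      if 3 ∣ ∑ t, (I t : ℕ) + 2 * ∑ t, (J t : ℕ) then 1 / 8 else 0 := by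
  have hI := sum_val_le_card I
  have hJ := sum_val_le_card J
  simp only [chiGHZ, chiW, chiWt, conj_ite_one_div_ofReal]
  generalize ∑ t, (I t : ℕ) = s at hI ⊢
  generalize ∑ t, (J t : ℕ) = s' at hJ ⊢
  simp only [Fintype.card_fin] at hI hJ
  interval_cases s <;> interval_cases s' <;>
    norm_num [mul_assoc, inv_sqrt_mul_inv_sqrt]

lemma sum_normSq_psiWG (k : Fin 3) : ∑ j, Complex.normSq (psiWG k j) = 1 := by
  simp [psiWG_apply, Complex.normSq_eq_norm_sq, norm_omega3]

/-- exact form of Example 1, symmetric decomposition of the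
Wei–Goldbart state `ρ(1/4, 3/8)`: for all multi-indices `I, J ∈ (Fin 2)³`,
`(1/4)χ_GHZ(I)conj(χ_GHZ(J)) + (3/8)χ_W(I)conj(χ_W(J)) + (3/8)χ_W̃(I)conj(χ_W̃(J))
 = (1/3)Σ_{k=0}^{2} (Π_t ψ_k(I t))·conj(Π_t ψ_k(J t))`,
and the `ψ_k` are unit vectors, so `ρ(1/4,3/8)` has a symmetric positive Hermitian
decomposition with three terms, each of weight `1/3`. -/
theorem weiGoldbart_symmetric_decomposition :
    (∀ I J : Fin 3 → Fin 2,
      (1 / 4 : ℂ) * chiGHZ I * (starRingEnd ℂ) (chiGHZ J)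
        + (3 / 8 : ℂ) * chiW I * (starRingEnd ℂ) (chiW J)
        + (3 / 8 : ℂ) * chiWt I * (starRingEnd ℂ) (chiWt J)
      = (1 / 3 : ℂ) * ∑ k : Fin 3,
          (∏ t, psiWG k (I t)) * (starRingEnd ℂ) (∏ t, psiWG k (J t))) ∧
    (∀ k : Fin 3, ∑ j, Complex.normSq (psiWG k j) = 1) :=
  ⟨fun I J => (weiGoldbart_density_eq_ite I J).trans (sum_prod_psiWG_mul_conj I J).symm,
    sum_normSq_psiWG⟩
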